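/- arXiv:2510.20936 — 4 statements merged into one kernel-verified Lean document; each statement's English description precedes it below -/
import Mathlib

section
/- Let M be a finite-dimensional smooth manifold without boundary and let Q be a finitely generated, fiber-determined C^∞(M)-module. Then there exist a natural number N and a C^∞(M)-submodule K of the free module C^∞(M)^N with the following pointwise-determination property: a tuple σ ∈ C^∞(M)^N belongs to K whenever for every m ∈ M there exists k ∈ K with σ_i(m) = k_i(m) for all i = 1,…,N; and Q is isomorphic as a C^∞(M)-module to C^∞(M)^N / K. -/
open scoped Manifold

noncomputable section

/-- The ideal of smooth real-valued functions on the manifold `M` vanishing at the point `m`. -/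
def idealAt {E : Type*} [NormedAddCommGroup E] [NormedSpace ℝ E]
    {M : Type*} [TopologicalSpace M] [ChartedSpace E M] (m : M) :
    Ideal C^(⊤ : ℕ∞)⟮modelWithCornersSelf ℝ E, M; ℝ⟯ :=
  RingHom.ker (ContMDiffMap.evalRingHom m)

/-- Every finitely generated, fiber-determined `C^∞(M)`-module `Q` is
isomorphic to a quotient `C^∞(M)^N / K` where the submodule `K` is pointwise determined:
a tuple belongs to `K` as soon as at every point it agrees with the value of some element
of `K`. -/
theorem exists_pointwise_determined_presentation
    {E : Type*} [NormedAddCommGroup E] [NormedSpace ℝ E] [FiniteDimensional ℝ E]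
    {M : Type*} [TopologicalSpace M] [ChartedSpace E M]
    [IsManifold (modelWithCornersSelf ℝ E) (⊤ : ℕ∞) M]
    [T2Space M] [SecondCountableTopology M]
    (Q : Type*) [AddCommGroup Q] [Module C^(⊤ : ℕ∞)⟮modelWithCornersSelf ℝ E, M; ℝ⟯ Q]
    [Module.Finite C^(⊤ : ℕ∞)⟮modelWithCornersSelf ℝ E, M; ℝ⟯ Q]
    (hQ : ∀ q : Q, (∀ m : M, q ∈ idealAt (E := E) m •
        (⊤ : Submodule C^(⊤ : ℕ∞)⟮modelWithCornersSelf ℝ E, M; ℝ⟯ Q)) → q = 0) :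
    ∃ (N : ℕ)
      (K : Submodule C^(⊤ : ℕ∞)⟮modelWithCornersSelf ℝ E, M; ℝ⟯
            (Fin N → C^(⊤ : ℕ∞)⟮modelWithCornersSelf ℝ E, M; ℝ⟯)),
      (∀ σ : Fin N → C^(⊤ : ℕ∞)⟮modelWithCornersSelf ℝ E, M; ℝ⟯,
          (∀ m : M, ∃ k ∈ K, ∀ i : Fin N, σ i m = k i m) → σ ∈ K) ∧
      Nonempty (((Fin N → C^(⊤ : ℕ∞)⟮modelWithCornersSelf ℝ E, M; ℝ⟯) ⧸ K)
          ≃ₗ[C^(⊤ : ℕ∞)⟮modelWithCornersSelf ℝ E, M; ℝ⟯] Q) := by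
  classical
  set R := C^(⊤ : ℕ∞)⟮modelWithCornersSelf ℝ E, M; ℝ⟯
  obtain ⟨N, f, hf⟩ := Module.Finite.exists_fin' R Q
  refine ⟨N, LinearMap.ker f, ?_, ⟨f.quotKerEquivOfSurjective hf⟩⟩
  intro σ hσ
  have hfσ : f σ = 0 := by
    apply hQ
    intro m
    obtain ⟨k, hk, hki⟩ := hσ m
    have hmem : σ - k ∈ idealAt (E := E) m • (⊤ : Submodule R (Fin N → R)) := by
      have : σ - k = ∑ i : Fin N, (σ i - k i) • (Pi.single i 1 : Fin N → R) := by
        funext j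
        simp [Finset.sum_apply, Pi.single_apply]
      rw [this]
      refine Submodule.sum_mem _ fun i _ => ?_
      refine Submodule.smul_mem_smul ?_ trivial
      show (σ i - k i) ∈ RingHom.ker (ContMDiffMap.evalRingHom m)
      simp only [RingHom.mem_ker]
      have : (σ i - k i) m = σ i m - k i m := rfl
      simp [ContMDiffMap.evalRingHom, this, hki i]
    have : f σ = f (σ - k) := by
      rw [map_sub, LinearMap.mem_ker.mp hk, sub_zero]
    rw [this]
    have h1 : f (σ - k) ∈ idealAt (E := E) m • Submodule.map f ⊤ := by
      rw [← Submodule.map_smul'']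
      exact Submodule.mem_map_of_mem hmem
    exact Submodule.smul_mono le_rfl le_top h1
  exact LinearMap.mem_ker.mpr hfσ
end
end

section
/- Let M be a finite-dimensional smooth manifold without boundary, let Q be a fiber-determined C^∞(M)-module, and let f: C^∞(M)^N → Q be a surjective C^∞(M)-linear map with kernel K. Then for every σ ∈ C^∞(M)^N one has σ ∈ K if and only if for every m ∈ M there exists k ∈ K with σ_i(m) = k_i(m) for all i = 1,…,N. -/
open scoped Manifold

noncomputable section

/-- If `Q` is a fiber-determined `C^∞(M)`-module and
`f : C^∞(M)^N → Q` is a surjective `C^∞(M)`-linear map with kernel `K`, then a tuple `σ`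
belongs to `K` if and only if at every point `m ∈ M` it agrees with the value of some
element of `K`. -/
theorem mem_kernel_iff_pointwise_mem
    {E : Type*} [NormedAddCommGroup E] [NormedSpace ℝ E] [FiniteDimensional ℝ E]
    {M : Type*} [TopologicalSpace M] [ChartedSpace E M]
    [IsManifold (modelWithCornersSelf ℝ E) (⊤ : ℕ∞) M]
    [T2Space M] [SecondCountableTopology M]
    (Q : Type*) [AddCommGroup Q] [Module C^(⊤ : ℕ∞)⟮modelWithCornersSelf ℝ E, M; ℝ⟯ Q]
    (hQ : ∀ q : Q, (∀ m : M, q ∈ idealAt (E := E) m •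
        (⊤ : Submodule C^(⊤ : ℕ∞)⟮modelWithCornersSelf ℝ E, M; ℝ⟯ Q)) → q = 0)
    (N : ℕ)
    (f : (Fin N → C^(⊤ : ℕ∞)⟮modelWithCornersSelf ℝ E, M; ℝ⟯)
        →ₗ[C^(⊤ : ℕ∞)⟮modelWithCornersSelf ℝ E, M; ℝ⟯] Q)
    (hf : Function.Surjective f)
    (σ : Fin N → C^(⊤ : ℕ∞)⟮modelWithCornersSelf ℝ E, M; ℝ⟯) :
    σ ∈ LinearMap.ker f ↔
      ∀ m : M, ∃ k ∈ LinearMap.ker f, ∀ i : Fin N, σ i m = k i m := by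
  constructor
  · intro h m
    exact ⟨σ, h, fun i => rfl⟩
  · intro h
    rw [LinearMap.mem_ker]
    apply hQ
    intro m
    obtain ⟨k, hk, hkm⟩ := h m
    have hfs : f σ = f (σ - k) := by
      rw [map_sub, LinearMap.mem_ker.mp hk, sub_zero]
    rw [hfs, pi_eq_sum_univ (σ - k), map_sum]
    apply Submodule.sum_mem
    intro i _
    rw [map_smul]
    apply Submodule.smul_mem_smul _ Submodule.mem_top
    show _ ∈ RingHom.ker _
    rw [RingHom.mem_ker]
    have : (σ - k) i = σ i - k i := rfl
    simp [this, ContMDiffMap.evalRingHom, hkm i]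
end
end

section
/- Let M be a finite-dimensional smooth manifold without boundary and let S be a sheaf of modules over the sheaf of smooth real-valued functions on M. If the global sections S(M) form a fiber-determined C^∞(M)-module, then for every open subset U ⊆ M the module S(U) is a fiber-determined C^∞(U)-module; that is, if σ ∈ S(U) satisfies σ ∈ I_m(U)·S(U) for every m ∈ U, where I_m(U) = {f ∈ C^∞(U) | f(m) = 0}, then σ = 0. -/
open scoped Manifold
open TopologicalSpace

noncomputable section

/-- A sheaf of modules over the sheaf of smooth real-valued functions on a manifold `M`:
to each open `U ⊆ M` it assigns a module `obj U` over `C^∞(U)`, with additive restriction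
maps compatible with restriction of smooth functions, satisfying the sheaf axioms. -/
structure SmoothSheafOfModules (E : Type*) [NormedAddCommGroup E] [NormedSpace ℝ E]
    (M : Type*) [TopologicalSpace M] [ChartedSpace E M] where
  /-- the module of sections over an open set -/
  obj : Opens M → Type*
  [addCommGroup : ∀ U : Opens M, AddCommGroup (obj U)]
  [module : ∀ U : Opens M,
    Module C^(⊤ : ℕ∞)⟮modelWithCornersSelf ℝ E, U; ℝ⟯ (obj U)]
  /-- restriction of sections -/
  res : ∀ {U V : Opens M}, V ≤ U → obj U →+ obj V
  res_id : ∀ (U : Opens M) (s : obj U), res (le_refl U) s = s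
  res_comp : ∀ {U V W : Opens M} (hVU : V ≤ U) (hWV : W ≤ V) (s : obj U),
    res hWV (res hVU s) = res (hWV.trans hVU) s
  res_smul : ∀ {U V : Opens M} (h : V ≤ U)
    (f : C^(⊤ : ℕ∞)⟮modelWithCornersSelf ℝ E, U; ℝ⟯) (s : obj U),
    res h (f • s) =
      ContMDiffMap.restrictRingHom (modelWithCornersSelf ℝ E) (modelWithCornersSelf ℝ ℝ) ℝ h f
        • res h s
  locality : ∀ {U : Opens M} (𝒰 : Set (Opens M)) (hle : ∀ W ∈ 𝒰, W ≤ U),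
    U ≤ sSup 𝒰 → ∀ s : obj U, (∀ W (hW : W ∈ 𝒰), res (hle W hW) s = 0) → s = 0
  gluing : ∀ {U : Opens M} (𝒰 : Set (Opens M)) (hle : ∀ W ∈ 𝒰, W ≤ U), U ≤ sSup 𝒰 →
    ∀ s : ∀ W ∈ 𝒰, obj W,
    (∀ (W) (hW : W ∈ 𝒰) (W') (hW' : W' ∈ 𝒰),
      res inf_le_left (s W hW) = res inf_le_right (s W' hW')) →
    ∃ t : obj U, ∀ W (hW : W ∈ 𝒰), res (hle W hW) t = s W hW

attribute [instance] SmoothSheafOfModules.addCommGroup SmoothSheafOfModules.module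

section Aux

variable {E : Type*} [NormedAddCommGroup E] [NormedSpace ℝ E]
  {M : Type*} [TopologicalSpace M] [ChartedSpace E M]

/-- Restriction of a global smooth function to an open set. -/
def restrictFun (U : Opens M) (g : C^(⊤ : ℕ∞)⟮𝓘(ℝ, E), M; ℝ⟯) :
    C^(⊤ : ℕ∞)⟮𝓘(ℝ, E), U; ℝ⟯ :=
  ⟨fun y => g y, g.contMDiff.comp contMDiff_subtype_val⟩

@[simp] lemma restrictFun_apply (U : Opens M) (g : C^(⊤ : ℕ∞)⟮𝓘(ℝ, E), M; ℝ⟯) (y : U) :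
    restrictFun U g y = g y := rfl

lemma restrictRingHom_restrictFun {U V : Opens M} (h : V ≤ U)
    (g : C^(⊤ : ℕ∞)⟮𝓘(ℝ, E), M; ℝ⟯) :
    ContMDiffMap.restrictRingHom 𝓘(ℝ, E) 𝓘(ℝ, ℝ) ℝ h (restrictFun U g) = restrictFun V g :=
  DFunLike.ext _ _ fun _ => rfl

lemma mem_idealAt_iff {m : M} {f : C^(⊤ : ℕ∞)⟮modelWithCornersSelf ℝ E, M; ℝ⟯} :
    f ∈ idealAt (E := E) m ↔ f m = 0 := by rw [idealAt, RingHom.mem_ker]; rfl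

end Aux

section Ext
attribute [local instance] Classical.propDecidable

variable {E : Type*} [NormedAddCommGroup E] [NormedSpace ℝ E]
  {M : Type*} [TopologicalSpace M] [ChartedSpace E M]

variable (U : Opens M) (φ : C^(⊤ : ℕ∞)⟮𝓘(ℝ, E), M; ℝ⟯)
  (hφ : tsupport ⇑φ ⊆ (U : Set M)) (f : C^(⊤ : ℕ∞)⟮𝓘(ℝ, E), U; ℝ⟯)

/-- Extension by zero of `φ·f` where `tsupport φ ⊆ U` and `f` is smooth on `U`. -/
def mulExtend : C^(⊤ : ℕ∞)⟮𝓘(ℝ, E), M; ℝ⟯ := by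
  refine ⟨fun x => if h : x ∈ U then φ x * f ⟨x, h⟩ else 0, ?_⟩
  intro x
  by_cases hx : x ∈ U
  · have h1 : ContMDiffAt 𝓘(ℝ, E) 𝓘(ℝ, ℝ) ((⊤ : ℕ∞) : WithTop ℕ∞)
        (fun y : U => (if h : (y : M) ∈ U then φ y * f ⟨y, h⟩ else 0)) ⟨x, hx⟩ := by
      have : (fun y : U => (if h : (y : M) ∈ U then φ (y : M) * f ⟨y, h⟩ else 0))
          = fun y : U => φ (y : M) * f y := funext fun y => dif_pos y.2
      rw [this]
      exact ((φ.contMDiff.comp contMDiff_subtype_val).mul f.contMDiff).contMDiffAt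
    exact (contMDiffAt_subtype_iff (U := U)
      (f := fun x => if h : x ∈ U then φ x * f ⟨x, h⟩ else 0)).mp h1
  · have hx' : x ∉ tsupport ⇑φ := fun h => hx (hφ h)
    refine (contMDiffAt_const (c := (0:ℝ))).congr_of_eventuallyEq ?_
    filter_upwards [(isClosed_tsupport ⇑φ).isOpen_compl.mem_nhds hx'] with y hy
    by_cases hyU : y ∈ U
    · simp [dif_pos hyU, image_eq_zero_of_notMem_tsupport hy]
    · simp [dif_neg hyU]

lemma mulExtend_of_mem {x : M} (h : x ∈ U) : mulExtend U φ hφ f x = φ x * f ⟨x, h⟩ :=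
  dif_pos h

lemma mulExtend_of_nmem {x : M} (h : x ∉ tsupport ⇑φ) : mulExtend U φ hφ f x = 0 := by
  by_cases hx : x ∈ U
  · rw [mulExtend_of_mem U φ hφ f hx, image_eq_zero_of_notMem_tsupport h, zero_mul]
  · exact dif_neg hx

end Ext

section Sheaf

variable {E : Type*} [NormedAddCommGroup E] [NormedSpace ℝ E]
  {M : Type*} [TopologicalSpace M] [ChartedSpace E M]
  (S : SmoothSheafOfModules E M)

lemma res_congr {U V W : Opens M} (hWU : W ≤ U) (hWV : W ≤ V) {sU : S.obj U} {sV : S.obj V}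
    (h : S.res (inf_le_left : U ⊓ V ≤ U) sU = S.res inf_le_right sV) :
    S.res hWU sU = S.res hWV sV := by
  have hW : W ≤ U ⊓ V := le_inf hWU hWV
  rw [← S.res_comp inf_le_left hW sU, ← S.res_comp inf_le_right hW sV, h]

lemma zeroTwo {U V : Opens M} (hUV : U ⊔ V = ⊤) (s : S.obj ⊤)
    (hU : S.res le_top s = (0 : S.obj U)) (hV : S.res le_top s = (0 : S.obj V)) : s = 0 := by
  refine S.locality {U, V} (fun W _ => le_top) ?_ s ?_
  · rw [sSup_pair, hUV]
  · rintro W (rfl | rfl)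
    exacts [hU, hV]

attribute [local instance] Classical.propDecidable

/-- The pair of sections `sU`, `sV` as a dependent function on `{U, V}`. -/
def pairSec {U V : Opens M} (sU : S.obj U) (sV : S.obj V) :
    ∀ W ∈ ({U, V} : Set (Opens M)), S.obj W :=
  fun W hW => if h : W = U then cast (congrArg S.obj h.symm) sU
    else cast (congrArg S.obj
      (show W = V from (Set.mem_insert_iff.mp hW).resolve_left h).symm) sV

lemma pairSec_U {U V : Opens M} (sU : S.obj U) (sV : S.obj V) (h : U ∈ ({U, V} : Set (Opens M))) :
    pairSec S sU sV U h = sU := by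
  rw [pairSec, dif_pos rfl]; exact cast_eq _ _

lemma pairSec_V {U V : Opens M} (sU : S.obj U) (sV : S.obj V) (h : V ∈ ({U, V} : Set (Opens M)))
    (hvu : V ≠ U) : pairSec S sU sV V h = sV := by
  rw [pairSec, dif_neg hvu]; exact cast_eq _ _

lemma res_pairSec_left {U V W X : Opens M} (sU : S.obj U) (sV : S.obj V)
    (hc : ∀ (Y : Opens M) (hYU : Y ≤ U) (hYV : Y ≤ V), S.res hYU sU = S.res hYV sV)
    (hW : W ∈ ({U, V} : Set (Opens M))) (hX : X ≤ W) (hXU : X ≤ U) :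
    S.res hX (pairSec S sU sV W hW) = S.res hXU sU := by
  rcases Set.mem_insert_iff.mp hW with h | h
  · subst h; rw [pairSec_U]
  · have h' : W = V := Set.mem_singleton_iff.mp h
    subst h'
    by_cases hvu : W = U
    · subst hvu; rw [pairSec_U]
    · rw [pairSec_V _ _ _ _ hvu]
      exact (hc X hXU hX).symm

lemma res_pairSec_right {U V W X : Opens M} (sU : S.obj U) (sV : S.obj V)
    (hc : ∀ (Y : Opens M) (hYU : Y ≤ U) (hYV : Y ≤ V), S.res hYU sU = S.res hYV sV)
    (hW : W ∈ ({U, V} : Set (Opens M))) (hX : X ≤ W) (hXV : X ≤ V) :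
    S.res hX (pairSec S sU sV W hW) = S.res hXV sV := by
  rcases Set.mem_insert_iff.mp hW with h | h
  · subst h; rw [pairSec_U]
    exact hc X hX hXV
  · have h' : W = V := Set.mem_singleton_iff.mp h
    subst h'
    by_cases hvu : W = U
    · rw [res_pairSec_left S sU sV hc hW hX (hvu ▸ hX)]
      exact hc X (hvu ▸ hX) hXV
    · rw [pairSec_V _ _ _ _ hvu]

lemma glueTwo {U V : Opens M} (hUV : U ⊔ V = ⊤) (sU : S.obj U) (sV : S.obj V)
    (hc : ∀ (Y : Opens M) (hYU : Y ≤ U) (hYV : Y ≤ V), S.res hYU sU = S.res hYV sV) :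
    ∃ t : S.obj ⊤, S.res le_top t = sU ∧ S.res le_top t = sV := by
  have hcover : (⊤ : Opens M) ≤ sSup {U, V} := by rw [sSup_pair, hUV]
  have compat : ∀ (W) (hW : W ∈ ({U, V} : Set (Opens M))) (W')
      (hW' : W' ∈ ({U, V} : Set (Opens M))),
      S.res inf_le_left (pairSec S sU sV W hW) = S.res inf_le_right (pairSec S sU sV W' hW') := by
    intro W hW W' hW'
    rcases Set.mem_insert_iff.mp hW with h | h
    · rw [res_pairSec_left S sU sV hc hW inf_le_left (le_trans inf_le_left h.le)]
      rcases Set.mem_insert_iff.mp hW' with h' | h'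
      · rw [res_pairSec_left S sU sV hc hW' inf_le_right (le_trans inf_le_right h'.le)]
      · rw [res_pairSec_right S sU sV hc hW' inf_le_right
          (le_trans inf_le_right (Set.mem_singleton_iff.mp h').le)]
        exact hc _ _ _
    · have h2 := (Set.mem_singleton_iff.mp h).le
      rw [res_pairSec_right S sU sV hc hW inf_le_left (le_trans inf_le_left h2)]
      rcases Set.mem_insert_iff.mp hW' with h' | h'
      · rw [res_pairSec_left S sU sV hc hW' inf_le_right (le_trans inf_le_right h'.le)]
        exact (hc _ _ _).symm
      · rw [res_pairSec_right S sU sV hc hW' inf_le_right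
          (le_trans inf_le_right (Set.mem_singleton_iff.mp h').le)]
  obtain ⟨t, ht⟩ := S.gluing {U, V} (fun W _ => le_top) hcover (pairSec S sU sV) compat
  refine ⟨t, ?_, ?_⟩
  · have h1 := ht U (Set.mem_insert _ _)
    rw [pairSec_U] at h1
    exact h1
  · rw [ht V (Set.mem_insert_of_mem _ rfl)]
    have h2 := res_pairSec_right S sU sV hc (Set.mem_insert_of_mem _ rfl)
      (le_refl V) (le_refl V)
    rwa [S.res_id, S.res_id] at h2

/-- The complement of the closed support of a global smooth function, as an open set. -/
def copen (g : C^(⊤ : ℕ∞)⟮𝓘(ℝ, E), M; ℝ⟯) : Opens M :=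
  ⟨(tsupport ⇑g)ᶜ, (isClosed_tsupport _).isOpen_compl⟩

lemma sup_copen (U : Opens M) (g : C^(⊤ : ℕ∞)⟮𝓘(ℝ, E), M; ℝ⟯)
    (h : tsupport ⇑g ⊆ (U : Set M)) : U ⊔ copen g = ⊤ := by
  rw [eq_top_iff]
  intro x _
  rw [Opens.mem_sup]
  by_cases hx : x ∈ tsupport ⇑g
  · exact Or.inl (h hx)
  · exact Or.inr hx

lemma restrictFun_zero_of_le_copen {V : Opens M} (g : C^(⊤ : ℕ∞)⟮𝓘(ℝ, E), M; ℝ⟯)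
    (h : V ≤ copen g) : restrictFun V g = 0 :=
  DFunLike.ext _ _ fun y => image_eq_zero_of_notMem_tsupport (h y.2)

lemma compat_zero {U : Opens M} (g : C^(⊤ : ℕ∞)⟮𝓘(ℝ, E), M; ℝ⟯)
    (x : S.obj U) :
    ∀ (Y : Opens M) (hYU : Y ≤ U) (hYC : Y ≤ copen g),
      S.res hYU (restrictFun U g • x) = S.res hYC (0 : S.obj (copen g)) := by
  intro Y hYU hYC
  rw [map_zero, S.res_smul, restrictRingHom_restrictFun,
    restrictFun_zero_of_le_copen _ hYC, zero_smul]

end Sheaf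

section Key

variable {E : Type*} [NormedAddCommGroup E] [NormedSpace ℝ E]
  {M : Type*} [TopologicalSpace M] [ChartedSpace E M]
  (S : SmoothSheafOfModules E M)

lemma key (U : Opens M) (φ χ : C^(⊤ : ℕ∞)⟮𝓘(ℝ, E), M; ℝ⟯)
    (hφU : tsupport ⇑φ ⊆ (U : Set M)) (hχU : tsupport ⇑χ ⊆ (U : Set M))
    (hχ1 : Set.EqOn ⇑χ 1 (tsupport ⇑φ))
    (p : M) (hpU : p ∈ U) (σ' : S.obj U)
    (hσ' : σ' ∈ idealAt (E := E) (⟨p, hpU⟩ : U) •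
      (⊤ : Submodule C^(⊤ : ℕ∞)⟮modelWithCornersSelf ℝ E, U; ℝ⟯ (S.obj U))) :
    ∀ s' : S.obj ⊤,
      S.res le_top s' = restrictFun U φ • σ' →
      S.res (le_top : copen φ ≤ ⊤) s' = 0 →
      s' ∈ idealAt (E := E) (⟨p, trivial⟩ : (⊤ : Opens M)) •
        (⊤ : Submodule C^(⊤ : ℕ∞)⟮modelWithCornersSelf ℝ E, (⊤ : Opens M); ℝ⟯ (S.obj ⊤)) := by
  have hsupφ : U ⊔ copen φ = ⊤ := sup_copen U φ hφU
  have hsupχ : U ⊔ copen χ = ⊤ := sup_copen U χ hχU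
  refine Submodule.smul_induction_on hσ' ?_ ?_
  · -- smul case
    intro f hf τ _ s' h1 h2
    -- extend χ • τ to a global section
    obtain ⟨tχ, htχU, _⟩ := glueTwo S hsupχ (restrictFun U χ • τ) 0 (compat_zero S χ τ)
    set g := mulExtend U φ hφU f with hg
    have hclaim : s' = restrictFun ⊤ g • tχ := by
      rw [← sub_eq_zero]
      refine zeroTwo S hsupφ _ ?_ ?_
      · rw [map_sub, h1, S.res_smul, restrictRingHom_restrictFun, htχU,
          smul_smul, smul_smul]
        rw [sub_eq_zero]
        congr 1
        refine DFunLike.ext _ _ fun y => ?_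
        show φ y * f y = g y * χ y
        have hgy : g y = φ (y : M) * f y := mulExtend_of_mem U φ hφU f y.2
        rw [hgy]
        by_cases hy : φ (y : M) = 0
        · simp [hy]
        · have : (y : M) ∈ tsupport ⇑φ := subset_tsupport _ hy
          rw [hχ1 this]
          simp
      · rw [map_sub, h2, S.res_smul, restrictRingHom_restrictFun]
        have : restrictFun (copen φ) g = 0 :=
          DFunLike.ext _ _ fun y => mulExtend_of_nmem U φ hφU f y.2
        rw [this, zero_smul, sub_zero]
    rw [hclaim]
    refine Submodule.smul_mem_smul ?_ Submodule.mem_top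
    rw [mem_idealAt_iff]
    show g p = 0
    rw [mulExtend_of_mem U φ hφU f hpU]
    have hfp : f ⟨p, hpU⟩ = 0 := hf
    rw [hfp, mul_zero]
  · -- add case
    intro x y hx hy s' h1 h2
    obtain ⟨s1, hs1U, hs1C⟩ := glueTwo S hsupφ (restrictFun U φ • x) 0 (compat_zero S φ x)
    have hs2U : S.res le_top (s' - s1) = restrictFun U φ • y := by
      rw [map_sub, h1, hs1U, smul_add]
      abel
    have hs2C : S.res (le_top : copen φ ≤ ⊤) (s' - s1) = 0 := by
      rw [map_sub, h2, hs1C, sub_zero]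
    have : s' = s1 + (s' - s1) := by abel
    rw [this]
    exact Submodule.add_mem _ (hx s1 hs1U hs1C) (hy (s' - s1) hs2U hs2C)

end Key

/-- If the global sections of a sheaf `S` of modules over the sheaf of
smooth functions on a manifold `M` form a fiber-determined `C^∞(M)`-module, then for
every open `U ⊆ M` the module `S(U)` is a fiber-determined `C^∞(U)`-module. -/
theorem fiberDetermined_of_global_fiberDetermined
    {E : Type*} [NormedAddCommGroup E] [NormedSpace ℝ E] [FiniteDimensional ℝ E]
    {M : Type*} [TopologicalSpace M] [ChartedSpace E M]
    [IsManifold (modelWithCornersSelf ℝ E) (⊤ : ℕ∞) M]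
    [T2Space M] [SecondCountableTopology M]
    (S : SmoothSheafOfModules E M)
    (hglobal : ∀ s : S.obj ⊤,
      (∀ m : (⊤ : Opens M), s ∈ idealAt (E := E) m •
        (⊤ : Submodule C^(⊤ : ℕ∞)⟮modelWithCornersSelf ℝ E, (⊤ : Opens M); ℝ⟯ (S.obj ⊤))) →
      s = 0) :
    ∀ (U : Opens M) (σ : S.obj U),
      (∀ m : U, σ ∈ idealAt (E := E) m •
        (⊤ : Submodule C^(⊤ : ℕ∞)⟮modelWithCornersSelf ℝ E, U; ℝ⟯ (S.obj U))) →
      σ = 0 := by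
  intro U σ hσ
  haveI : LocallyCompactSpace M := Manifold.locallyCompact_of_finiteDimensional 𝓘(ℝ, E)
  haveI : SigmaCompactSpace M := inferInstance
  haveI : MetrizableSpace M := Manifold.metrizableSpace 𝓘(ℝ, E) M
  haveI : NormalSpace M := inferInstance
  have main : ∀ m : M, m ∈ U → ∃ V : Opens M, m ∈ V ∧ ∃ h : V ≤ U, S.res h σ = 0 := by
    intro m hm
    obtain ⟨V1, hV1o, hmV1, hV1U⟩ := normal_exists_closure_subset
      (isClosed_singleton (x := m)) U.isOpen (Set.singleton_subset_iff.mpr hm)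
    obtain ⟨V, hVo, hmV, hVV1⟩ := normal_exists_closure_subset
      (isClosed_singleton (x := m)) hV1o hmV1
    obtain ⟨V2, hV2o, hV1V2, hV2U⟩ := normal_exists_closure_subset
      isClosed_closure U.isOpen hV1U
    obtain ⟨φ, hφ0, hφ1, -⟩ := exists_contMDiffMap_zero_one_of_isClosed 𝓘(ℝ, E) (n := ⊤)
      (hV1o.isClosed_compl) (isClosed_closure (s := V))
      (Set.disjoint_left.mpr fun x hx hx2 => hx (hVV1 hx2))
    have hφsupp : tsupport ⇑φ ⊆ closure V1 :=
      closure_minimal (fun x hx => by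
        by_contra hxV1
        exact hx (hφ0 fun hxv => hxV1 (subset_closure hxv))) isClosed_closure
    have hclV1U : closure V1 ⊆ (U : Set M) := hV1V2.trans (subset_closure.trans hV2U)
    have hφU : tsupport ⇑φ ⊆ (U : Set M) := hφsupp.trans hclV1U
    obtain ⟨χ, hχ0, hχ1, -⟩ := exists_contMDiffMap_zero_one_of_isClosed 𝓘(ℝ, E) (n := ⊤)
      (hV2o.isClosed_compl) (isClosed_closure (s := V1))
      (Set.disjoint_left.mpr fun x hx hx2 => hx (hV1V2 hx2))
    have hχU : tsupport ⇑χ ⊆ (U : Set M) :=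
      (closure_minimal (fun x hx => by
        by_contra hxV2
        exact hx (hχ0 fun hxv => hxV2 (subset_closure hxv))) isClosed_closure).trans
        hV2U
    have hχ1' : Set.EqOn ⇑χ 1 (tsupport ⇑φ) := fun x hx => hχ1 (hφsupp hx)
    obtain ⟨sg, hsgU, hsgC⟩ :=
      glueTwo S (sup_copen U φ hφU) (restrictFun U φ • σ) 0 (compat_zero S φ σ)
    have hinv : ∀ q : (⊤ : Opens M), sg ∈ idealAt (E := E) q •
        (⊤ : Submodule C^(⊤ : ℕ∞)⟮modelWithCornersSelf ℝ E, (⊤ : Opens M); ℝ⟯ (S.obj ⊤)) := by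
      intro q
      by_cases hq : (q : M) ∈ tsupport ⇑φ
      · have hqU : (q : M) ∈ U := hφU hq
        exact key S U φ χ hφU hχU hχ1' q hqU σ (hσ ⟨q, hqU⟩) sg hsgU hsgC
      · obtain ⟨A, hAo, hφA, hAq⟩ := normal_exists_closure_subset (isClosed_tsupport ⇑φ)
          (isOpen_compl_singleton (x := (q : M))) (fun x hx hxq => hq (hxq ▸ hx))
        obtain ⟨ψ, hψ0, hψ1, -⟩ := exists_contMDiffMap_zero_one_of_isClosed 𝓘(ℝ, E) (n := ⊤)
          (isClosed_singleton (x := (q : M))) isClosed_closure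
          (Set.disjoint_left.mpr fun x hx hx2 => (hAq hx2) hx)
        have hAsup : (⟨A, hAo⟩ : Opens M) ⊔ copen φ = ⊤ := by
          rw [eq_top_iff]
          intro x _
          rw [Opens.mem_sup]
          by_cases hx : x ∈ tsupport ⇑φ
          · exact Or.inl (hφA hx)
          · exact Or.inr hx
        have hψA : restrictFun (⟨A, hAo⟩ : Opens M) ψ = 1 :=
          DFunLike.ext _ _ fun y => hψ1 (subset_closure y.2)
        have hclaim : sg - restrictFun ⊤ ψ • sg = 0 := by
          refine zeroTwo S hAsup _ ?_ ?_
          · rw [map_sub, S.res_smul, restrictRingHom_restrictFun, hψA, one_smul, sub_self]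
          · rw [map_sub, hsgC, S.res_smul, restrictRingHom_restrictFun, hsgC, smul_zero,
              sub_zero]
        have heq : sg = restrictFun ⊤ ψ • sg := by rwa [sub_eq_zero] at hclaim
        rw [heq]
        refine Submodule.smul_mem_smul ?_ Submodule.mem_top
        rw [mem_idealAt_iff]
        exact hψ0 rfl
    have hsg0 : sg = 0 := hglobal sg hinv
    have hVU : (⟨V, hVo⟩ : Opens M) ≤ U :=
      fun x hx => hclV1U (subset_closure (hVV1 (subset_closure hx)))
    refine ⟨⟨V, hVo⟩, hmV rfl, hVU, ?_⟩
    have h5 := congrArg (S.res hVU) hsgU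
    rw [S.res_comp, hsg0, map_zero, S.res_smul, restrictRingHom_restrictFun] at h5
    have hφV : restrictFun (⟨V, hVo⟩ : Opens M) φ = 1 :=
      DFunLike.ext _ _ fun y => hφ1 (subset_closure y.2)
    rw [hφV, one_smul] at h5
    exact h5.symm
  refine S.locality {W : Opens M | ∃ h : W ≤ U, S.res h σ = 0}
    (fun W hW => hW.choose) ?_ σ ?_
  · intro x hx
    obtain ⟨V, hmV, hVU, h0⟩ := main x hx
    exact Opens.mem_sSup.mpr ⟨V, ⟨hVU, h0⟩, hmV⟩
  · intro W hW
    exact hW.choose_spec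
end
end

section
/- Let r: W → V be a morphism of smooth finite-rank real vector bundles over a finite-dimensional smooth manifold M without boundary (a smooth bundle map covering the identity of M and fiberwise linear). Then the image of r is a smooth singular subbundle of V: each fiber r(W_m) is a linear subspace of V_m, and for every m ∈ M and every v ∈ r(W_m) there exists a global smooth section σ of V with σ(m) = v and σ(m') ∈ r(W_{m'}) for all m' ∈ M. -/
open scoped Manifold Bundle
open Bundle

noncomputable section

/-- A dependent section of a smooth vector bundle is smooth if the associated map to the
total space is smooth. -/
def IsSmoothSection {EM : Type*} [NormedAddCommGroup EM] [NormedSpace ℝ EM]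
    {M : Type*} [TopologicalSpace M] [ChartedSpace EM M]
    [IsManifold (modelWithCornersSelf ℝ EM) (⊤ : ℕ∞) M]
    (F : Type*) [NormedAddCommGroup F] [NormedSpace ℝ F]
    (V : M → Type*) [TopologicalSpace (TotalSpace F V)]
    [∀ x, AddCommGroup (V x)] [∀ x, Module ℝ (V x)] [∀ x, TopologicalSpace (V x)]
    [FiberBundle F V] [VectorBundle ℝ F V]
    (σ : ∀ x, V x) : Prop :=
  ContMDiff (modelWithCornersSelf ℝ EM)
    ((modelWithCornersSelf ℝ EM).prod (modelWithCornersSelf ℝ F)) (⊤ : ℕ∞)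
    (fun x => TotalSpace.mk' F x (σ x))

section Aux
open Bundle Set Function
open scoped Manifold Topology

/-- Existence of a global smooth section of a smooth vector bundle with prescribed value
at a point, supported in a neighborhood. -/
theorem exists_smooth_section_eq {EM : Type*} [NormedAddCommGroup EM] [NormedSpace ℝ EM]
    [FiniteDimensional ℝ EM]
    {M : Type*} [TopologicalSpace M] [ChartedSpace EM M]
    [IsManifold (modelWithCornersSelf ℝ EM) (⊤ : ℕ∞) M] [T2Space M]
    (FW : Type*) [NormedAddCommGroup FW] [NormedSpace ℝ FW]
    (W : M → Type*) [TopologicalSpace (TotalSpace FW W)]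
    [∀ x, AddCommGroup (W x)] [∀ x, Module ℝ (W x)] [∀ x, TopologicalSpace (W x)]
    [FiberBundle FW W] [VectorBundle ℝ FW W]
    [ContMDiffVectorBundle (⊤ : ℕ∞) FW W (modelWithCornersSelf ℝ EM)]
    (m : M) (w : W m) :
    ∃ τ : ∀ x, W x,
      ContMDiff (modelWithCornersSelf ℝ EM)
        ((modelWithCornersSelf ℝ EM).prod (modelWithCornersSelf ℝ FW)) (⊤ : ℕ∞)
        (fun x => TotalSpace.mk' FW x (τ x)) ∧ τ m = w := by
  set I := modelWithCornersSelf ℝ EM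
  set e := trivializationAt FW W m with he
  have hm : m ∈ e.baseSet := FiberBundle.mem_baseSet_trivializationAt' m
  -- a smooth bump function with closed support inside `e.baseSet`
  obtain ⟨f, -, hf⟩ := ((SmoothBumpFunction.nhds_basis_tsupport (I := I) m).mem_iff).1
    (e.open_baseSet.mem_nhds hm)
  set v0 : FW := (e ⟨m, w⟩).2 with hv0
  refine ⟨fun x => f x • e.symm x v0, ?_, ?_⟩
  · intro x₀
    by_cases hx₀ : x₀ ∈ e.baseSet
    · rw [Trivialization.contMDiffAt_iff (e := e) (e.mem_source.2 hx₀)]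
      refine ⟨contMDiffAt_id, ?_⟩
      have : ContMDiffAt I (modelWithCornersSelf ℝ FW) (⊤ : ℕ∞) (fun x => f x • v0) x₀ :=
        (f.contMDiff x₀).smul contMDiffAt_const
      refine this.congr_of_eventuallyEq ?_
      filter_upwards [e.open_baseSet.mem_nhds hx₀] with x hx
      have hlin := e.linear ℝ hx
      have : e ⟨x, e.symm x v0⟩ = (x, v0) := e.apply_mk_symm hx v0
      calc (e ⟨x, f x • e.symm x v0⟩).2 = f x • (e ⟨x, e.symm x v0⟩).2 := hlin.map_smul _ _
        _ = f x • v0 := by rw [this]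
    · have hx₀' : x₀ ∉ tsupport f := fun h => hx₀ (hf h)
      have hz := (Bundle.contMDiff_zeroSection ℝ W (F := FW) (IB := I) (n := ((⊤ : ℕ∞) : WithTop ℕ∞))) x₀
      refine hz.congr_of_eventuallyEq ?_
      filter_upwards [(isClosed_tsupport f).isOpen_compl.mem_nhds hx₀'] with x hx
      have : f x = 0 := image_eq_zero_of_notMem_tsupport hx
      simp [Bundle.zeroSection, this]
  · have : e.symm m v0 = w := e.symm_apply_apply_mk hm w
    show f m • e.symm m v0 = w
    rw [this, f.eq_one, one_smul]

end Aux

/-- The image of a morphism `r : W → V` of smooth vector bundles over `M`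
(a smooth, fiberwise-linear bundle map covering the identity) is a smooth singular
subbundle of `V`: each fiber `r(W_m)` is a linear subspace of `V_m`, and every vector in
`r(W_m)` extends to a global smooth section of `V` taking values in the image of `r`. -/
theorem image_of_bundle_morphism_is_smooth_singular_subbundle
    {EM : Type*} [NormedAddCommGroup EM] [NormedSpace ℝ EM] [FiniteDimensional ℝ EM]
    {M : Type*} [TopologicalSpace M] [ChartedSpace EM M]
    [IsManifold (modelWithCornersSelf ℝ EM) (⊤ : ℕ∞) M]
    [T2Space M] [SecondCountableTopology M]
    -- the bundle `W`
    (FW : Type*) [NormedAddCommGroup FW] [NormedSpace ℝ FW] [FiniteDimensional ℝ FW]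
    (W : M → Type*) [TopologicalSpace (TotalSpace FW W)]
    [∀ x, AddCommGroup (W x)] [∀ x, Module ℝ (W x)] [∀ x, TopologicalSpace (W x)]
    [FiberBundle FW W] [VectorBundle ℝ FW W]
    [ContMDiffVectorBundle (⊤ : ℕ∞) FW W (modelWithCornersSelf ℝ EM)]
    -- the bundle `V`
    (FV : Type*) [NormedAddCommGroup FV] [NormedSpace ℝ FV] [FiniteDimensional ℝ FV]
    (V : M → Type*) [TopologicalSpace (TotalSpace FV V)]
    [∀ x, AddCommGroup (V x)] [∀ x, Module ℝ (V x)] [∀ x, TopologicalSpace (V x)]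
    [FiberBundle FV V] [VectorBundle ℝ FV V]
    [ContMDiffVectorBundle (⊤ : ℕ∞) FV V (modelWithCornersSelf ℝ EM)]
    -- the bundle morphism, fiberwise linear and smooth on total spaces
    (r : ∀ m : M, W m →ₗ[ℝ] V m)
    (hr : ContMDiff ((modelWithCornersSelf ℝ EM).prod (modelWithCornersSelf ℝ FW))
      ((modelWithCornersSelf ℝ EM).prod (modelWithCornersSelf ℝ FV)) (⊤ : ℕ∞)
      (fun w : TotalSpace FW W => TotalSpace.mk' FV w.proj (r w.proj w.2))) :
    (∃ Dsub : ∀ m : M, Submodule ℝ (V m),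
      ∀ m : M, (Dsub m : Set (V m)) = Set.range (r m)) ∧
    (∀ m : M, ∀ v : V m, (∃ w : W m, r m w = v) →
      ∃ σ : ∀ x, V x, IsSmoothSection (EM := EM) FV V σ ∧ σ m = v ∧
        ∀ m' : M, ∃ w' : W m', r m' w' = σ m') := by
  constructor
  · exact ⟨fun m => LinearMap.range (r m), fun m => LinearMap.coe_range _⟩
  · rintro m v ⟨w, rfl⟩
    obtain ⟨τ, hτ, hτm⟩ := exists_smooth_section_eq (EM := EM) FW W m w
    refine ⟨fun x => r x (τ x), ?_, by show r m (τ m) = r m w; rw [hτm], fun m' => ⟨τ m', rfl⟩⟩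
    exact hr.comp hτ
end
end
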